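/- Let E₀ ∈ ℝ and ρ₀ > 0. Let n : ℝ → ℝ be continuous and nondecreasing, with n(λ) = 0 for λ ≤ E₀ and n(λ) ≤ C₀(1 + |λ|)^{3/2} for some C₀ > 0. Suppose E_M ∈ ℝ and η > 0 are such that n(E_M) = ρ₀ and n is strictly increasing on (E_M − η, E_M + η). Suppose μ : (0,∞) → ℝ satisfies for every β > 0 the equation ∫_ℝ β·e^{β(λ−μ(β))}·(e^{β(λ−μ(β))} + 1)⁻²·n(λ) dλ = ρ₀. Then μ(β) converges to E_M as β → ∞. -/

import Mathlib

open Filter Real MeasureTheory Set Topology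

/-!
Substituting `l = μ + t / β` turns the grand-canonical density into `∫ ψ(t) n(μ + t / β) dt`,
where `ψ(t) = eᵗ / (eᵗ + 1)²` is the logistic density: `∫ ψ = 1` and `ψ(t) ≤ e^{-|t|}`.
In this form the density is nondecreasing in `μ`, and, since the decay of `ψ` beats the growth
`n(l) ≤ K e^{|l|/2}`, dominated convergence shows that it tends to `n(a)` as `β → ∞` at fixed
`μ = a`. For `a < E_M < b` close to `E_M`, strict monotonicity gives
`n(a) < ρ₀ < n(b)`, so for large `β` the densities at `a` and at `b` lie on either side of `ρ₀`,
and monotonicity in `μ` traps `μ(β)` in `(a, b)`.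
-/

noncomputable def logisticDensity (t : ℝ) : ℝ := exp t / (exp t + 1) ^ 2

noncomputable def grandCanonicalDensity (n : ℝ → ℝ) (β μ : ℝ) : ℝ :=
  ∫ l, β * exp (β * (l - μ)) * ((exp (β * (l - μ)) + 1) ^ 2)⁻¹ * n l

theorem integrable_exp_neg_mul_abs {c : ℝ} (hc : 0 < c) :
    Integrable fun t : ℝ => exp (-c * |t|) := by
  refine .of_integral_ne_zero ?_
  rw [integral_comp_abs (f := fun s => exp (-c * s)),
    integral_exp_mul_Ioi (neg_lt_zero.2 hc)]
  simp [hc.ne']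

theorem one_add_rpow_three_halves_le {x : ℝ} (hx : 0 ≤ x) :
    (1 + x) ^ ((3 : ℝ) / 2) ≤ 16 * exp (1 / 2 * x) := by
  have h2 : (1 + x) ^ ((3 : ℝ) / 2) ≤ (1 + x) ^ (2 : ℝ) :=
    rpow_le_rpow_of_exponent_le (by linarith) (by norm_num)
  have hexp : x / 4 + 1 ≤ exp (x / 4) := add_one_le_exp _
  calc (1 + x) ^ ((3 : ℝ) / 2) ≤ (1 + x) ^ 2 := by exact_mod_cast h2
    _ ≤ 16 * (x / 4 + 1) ^ 2 := by nlinarith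
    _ ≤ 16 * exp (x / 4) ^ 2 := by gcongr
    _ = 16 * exp (1 / 2 * x) := by rw [← exp_nat_mul]; ring_nf

namespace logisticDensity

theorem nonneg (t : ℝ) : 0 ≤ logisticDensity t := by
  unfold logisticDensity; positivity

theorem le_exp_neg_abs (t : ℝ) : logisticDensity t ≤ exp (-|t|) := by
  have hpos : 0 < exp t := exp_pos t
  unfold logisticDensity
  rw [div_le_iff₀ (by positivity)]
  rcases abs_cases t with ⟨ht, -⟩ | ⟨ht, -⟩ <;> rw [ht]
  · have : exp (-t) * exp t = 1 := by rw [← exp_add, neg_add_cancel, exp_zero]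
    nlinarith [exp_pos (-t)]
  · rw [neg_neg]; nlinarith [sq_nonneg (exp t), mul_pos hpos hpos]

theorem hasDerivAt_neg_inv_exp_add_one (t : ℝ) :
    HasDerivAt (fun s => -(exp s + 1)⁻¹) (logisticDensity t) t := by
  refine (((hasDerivAt_exp t).add_const 1).inv (by positivity)).neg.congr_deriv ?_
  rw [logisticDensity, neg_div, neg_neg]

theorem continuous : Continuous logisticDensity :=
  continuous_exp.div (by fun_prop) fun t => by positivity

theorem integrable : Integrable logisticDensity := by
  refine (integrable_exp_neg_mul_abs one_pos).mono' continuous.aestronglyMeasurable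
    (ae_of_all _ fun t => ?_)
  rw [norm_of_nonneg (nonneg t), neg_one_mul]
  exact le_exp_neg_abs t

theorem integral_eq_one : ∫ t, logisticDensity t = 1 := by
  have hbot : Tendsto (fun s => -(exp s + 1)⁻¹) atBot (𝓝 (-1)) := by
    simpa using ((tendsto_exp_atBot.add_const 1).inv₀ (by norm_num)).neg
  have htop : Tendsto (fun s => -(exp s + 1)⁻¹) atTop (𝓝 0) := by
    simpa using (tendsto_atTop_add_const_right _ 1 tendsto_exp_atTop).inv_tendsto_atTop.neg
  rw [integral_of_hasDerivAt_of_tendsto hasDerivAt_neg_inv_exp_add_one integrable hbot htop]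
  norm_num

end logisticDensity

theorem grandCanonicalDensity_eq_integral_logisticDensity (n : ℝ → ℝ) {β : ℝ} (hβ : 0 < β)
    (μ : ℝ) :
    grandCanonicalDensity n β μ = ∫ t, logisticDensity t * n (μ + t / β) := by
  calc grandCanonicalDensity n β μ
      = ∫ s, β * (logisticDensity (β * s) * n (μ + β * s / β)) := by
        rw [grandCanonicalDensity, ← integral_add_right_eq_self _ μ]
        congr 1 with s
        rw [logisticDensity, mul_div_cancel_left₀ _ hβ.ne', add_sub_cancel_right, add_comm μ s]
        ring
    _ = ∫ t, logisticDensity t * n (μ + t / β) := by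
        rw [integral_const_mul,
          Measure.integral_comp_mul_left (fun t => logisticDensity t * n (μ + t / β)),
          abs_of_pos (inv_pos.2 hβ), smul_eq_mul, mul_inv_cancel_left₀ hβ.ne']

section GrowthBound

variable {n : ℝ → ℝ} {K c β : ℝ}

theorem abs_logisticDensity_mul_le (hc : 0 ≤ c) (hn : ∀ l, |n l| ≤ K * exp (c * |l|))
    (hβ : 1 ≤ β) (μ t : ℝ) :
    |logisticDensity t * n (μ + t / β)| ≤ K * exp (c * |μ|) * exp (-(1 - c) * |t|) := by
  have hK : 0 ≤ K := (mul_nonneg_iff_of_pos_right (exp_pos _)).1 ((abs_nonneg _).trans (hn 0))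
  have hshift : |μ + t / β| ≤ |μ| + |t| := by
    refine (abs_add_le _ _).trans (add_le_add_right ?_ _)
    rw [abs_div, abs_of_pos (one_pos.trans_le hβ)]
    exact div_le_self (abs_nonneg t) hβ
  calc |logisticDensity t * n (μ + t / β)| = logisticDensity t * |n (μ + t / β)| := by
        rw [abs_mul, abs_of_nonneg (logisticDensity.nonneg t)]
    _ ≤ exp (-|t|) * (K * exp (c * (|μ| + |t|))) := by
        gcongr
        · exact logisticDensity.le_exp_neg_abs t
        · exact (hn _).trans (by gcongr)
    _ = K * exp (c * |μ|) * exp (-(1 - c) * |t|) := by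
        rw [mul_assoc K, ← exp_add, mul_left_comm, ← exp_add]
        ring_nf

theorem integrable_logisticDensity_mul (hmeas : Measurable n) (hc₀ : 0 ≤ c) (hc₁ : c < 1)
    (hn : ∀ l, |n l| ≤ K * exp (c * |l|)) (hβ : 1 ≤ β) (μ : ℝ) :
    Integrable fun t => logisticDensity t * n (μ + t / β) := by
  refine ((integrable_exp_neg_mul_abs (sub_pos.2 hc₁)).const_mul (K * exp (c * |μ|))).mono'
    ?_ (ae_of_all _ fun t => abs_logisticDensity_mul_le hc₀ hn hβ μ t)
  exact logisticDensity.integrable.aestronglyMeasurable.mul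
    (hmeas.comp (by fun_prop)).aestronglyMeasurable

theorem grandCanonicalDensity_mono (hmono : Monotone n) (hc₀ : 0 ≤ c) (hc₁ : c < 1)
    (hn : ∀ l, |n l| ≤ K * exp (c * |l|)) (hβ : 1 ≤ β) :
    Monotone (grandCanonicalDensity n β) := by
  intro μ μ' hμμ'
  have hβ₀ : 0 < β := one_pos.trans_le hβ
  rw [grandCanonicalDensity_eq_integral_logisticDensity n hβ₀,
    grandCanonicalDensity_eq_integral_logisticDensity n hβ₀]
  refine integral_mono (integrable_logisticDensity_mul hmono.measurable hc₀ hc₁ hn hβ μ)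
    (integrable_logisticDensity_mul hmono.measurable hc₀ hc₁ hn hβ μ') fun t => ?_
  exact mul_le_mul_of_nonneg_left (hmono (by linarith)) (logisticDensity.nonneg t)

theorem tendsto_grandCanonicalDensity (hmeas : Measurable n) (hc₀ : 0 ≤ c) (hc₁ : c < 1)
    (hn : ∀ l, |n l| ≤ K * exp (c * |l|)) {a : ℝ} (ha : ContinuousAt n a) :
    Tendsto (fun β => grandCanonicalDensity n β a) atTop (𝓝 (n a)) := by
  have hshift (t : ℝ) : Tendsto (fun β => a + t / β) atTop (𝓝 a) := by
    simpa using (tendsto_const_nhds.div_atTop tendsto_id).const_add a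
  have hlim : Tendsto (fun β => ∫ t, logisticDensity t * n (a + t / β)) atTop
      (𝓝 (∫ t, logisticDensity t * n a)) :=
    tendsto_integral_filter_of_dominated_convergence
      (fun t => K * exp (c * |a|) * exp (-(1 - c) * |t|))
      ((eventually_ge_atTop 1).mono fun β hβ =>
        (integrable_logisticDensity_mul hmeas hc₀ hc₁ hn hβ a).aestronglyMeasurable)
      ((eventually_ge_atTop 1).mono fun β hβ =>
        ae_of_all _ fun t => abs_logisticDensity_mul_le hc₀ hn hβ a t)
      ((integrable_exp_neg_mul_abs (sub_pos.2 hc₁)).const_mul _)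
      (ae_of_all _ fun t => tendsto_const_nhds.mul (ha.tendsto.comp (hshift t)))
  rw [integral_mul_const, logisticDensity.integral_eq_one, one_mul] at hlim
  exact hlim.congr' ((eventually_gt_atTop 0).mono fun β hβ =>
    (grandCanonicalDensity_eq_integral_logisticDensity n hβ a).symm)

end GrowthBound

section ChemicalPotential

variable {n : ℝ → ℝ} {K c ρ₀ : ℝ} {μ : ℝ → ℝ}

theorem eventually_const_lt_of_grandCanonicalDensity_eq (hmono : Monotone n) (hc₀ : 0 ≤ c)
    (hc₁ : c < 1) (hn : ∀ l, |n l| ≤ K * exp (c * |l|))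
    (hμ : ∀ β > 0, grandCanonicalDensity n β (μ β) = ρ₀) {a : ℝ} (ha : ContinuousAt n a)
    (hna : n a < ρ₀) :
    ∀ᶠ β in atTop, a < μ β := by
  have hlim := tendsto_grandCanonicalDensity hmono.measurable hc₀ hc₁ hn ha
  filter_upwards [hlim.eventually_lt_const hna, eventually_ge_atTop 1] with β hβa hβ
  by_contra! hμa
  have := grandCanonicalDensity_mono hmono hc₀ hc₁ hn hβ hμa
  rw [hμ β (by linarith)] at this
  linarith

theorem eventually_lt_const_of_grandCanonicalDensity_eq (hmono : Monotone n) (hc₀ : 0 ≤ c)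
    (hc₁ : c < 1) (hn : ∀ l, |n l| ≤ K * exp (c * |l|))
    (hμ : ∀ β > 0, grandCanonicalDensity n β (μ β) = ρ₀) {b : ℝ} (hb : ContinuousAt n b)
    (hnb : ρ₀ < n b) :
    ∀ᶠ β in atTop, μ β < b := by
  have hlim := tendsto_grandCanonicalDensity hmono.measurable hc₀ hc₁ hn hb
  filter_upwards [hlim.eventually_const_lt hnb, eventually_ge_atTop 1] with β hβb hβ
  by_contra! hμb
  have := grandCanonicalDensity_mono hmono hc₀ hc₁ hn hβ hμb
  rw [hμ β (by linarith)] at this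
  linarith

end ChemicalPotential

theorem stmt_11_general (E₀ ρ₀ : ℝ)
    (n : ℝ → ℝ) (hcont : Continuous n) (hmono : Monotone n)
    (hzero : ∀ l : ℝ, l ≤ E₀ → n l = 0)
    (C₀ : ℝ) (hC₀ : 0 < C₀)
    (hbound : ∀ l : ℝ, n l ≤ C₀ * (1 + |l|) ^ ((3 : ℝ) / 2))
    (E_M η : ℝ) (hη : 0 < η) (hEM : n E_M = ρ₀)
    (hstrict : StrictMonoOn n (Set.Ioo (E_M - η) (E_M + η)))
    (μ : ℝ → ℝ)
    (hμ : ∀ β > (0 : ℝ),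
      ∫ l : ℝ, β * Real.exp (β * (l - μ β)) * ((Real.exp (β * (l - μ β)) + 1) ^ 2)⁻¹ * n l
        = ρ₀) :
    Tendsto μ atTop (nhds E_M) := by
  have hgrowth (l : ℝ) : |n l| ≤ 16 * C₀ * exp (1 / 2 * |l|) := by
    have hn₀ : 0 ≤ n l := hzero _ (min_le_right l E₀) ▸ hmono (min_le_left l E₀)
    rw [abs_of_nonneg hn₀, mul_comm 16, mul_assoc]
    exact (hbound l).trans (by gcongr; exact one_add_rpow_three_halves_le (abs_nonneg l))
  have hc₀ : (0 : ℝ) ≤ 1 / 2 := by norm_num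
  have hc₁ : (1 : ℝ) / 2 < 1 := by norm_num
  have hE_M : E_M ∈ Ioo (E_M - η) (E_M + η) := ⟨by linarith, by linarith⟩
  refine tendsto_order.2 ⟨fun a ha => ?_, fun b hb => ?_⟩
  · have hna : n (max a (E_M - η / 2)) < ρ₀ :=
      hEM ▸ hstrict ⟨lt_max_of_lt_right (by linarith), max_lt (by linarith) (by linarith)⟩ hE_M
        (max_lt ha (by linarith))
    exact (eventually_const_lt_of_grandCanonicalDensity_eq hmono hc₀ hc₁ hgrowth hμ
      hcont.continuousAt hna).mono fun β h => (le_max_left _ _).trans_lt h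
  · have hnb : ρ₀ < n (min b (E_M + η / 2)) :=
      hEM ▸ hstrict hE_M ⟨lt_min (by linarith) (by linarith), min_lt_of_right_lt (by linarith)⟩
        (lt_min hb (by linarith))
    exact (eventually_lt_const_of_grandCanonicalDensity_eq hmono hc₀ hc₁ hgrowth hμ
      hcont.continuousAt hnb).mono fun β h => h.trans_le (min_le_left _ _)

/-- Metallic case: if the integrated density of states `n` is strictly increasing
near `E_M` with `n(E_M) = ρ₀`, and `μ(β)` solves the grand-canonical density
equation for every `β > 0`, then the chemical potential converges to `E_M`. -/
theorem stmt_11 (E₀ ρ₀ : ℝ) (hρ₀ : 0 < ρ₀)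
    (n : ℝ → ℝ) (hcont : Continuous n) (hmono : Monotone n)
    (hzero : ∀ l : ℝ, l ≤ E₀ → n l = 0)
    (C₀ : ℝ) (hC₀ : 0 < C₀)
    (hbound : ∀ l : ℝ, n l ≤ C₀ * (1 + |l|) ^ ((3 : ℝ) / 2))
    (E_M η : ℝ) (hη : 0 < η) (hEM : n E_M = ρ₀)
    (hstrict : StrictMonoOn n (Set.Ioo (E_M - η) (E_M + η)))
    (μ : ℝ → ℝ)
    (hμ : ∀ β > (0 : ℝ),
      ∫ l : ℝ, β * Real.exp (β * (l - μ β)) * ((Real.exp (β * (l - μ β)) + 1) ^ 2)⁻¹ * n l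
        = ρ₀) :
    Tendsto μ atTop (nhds E_M) :=
  stmt_11_general E₀ ρ₀ n hcont hmono hzero C₀ hC₀ hbound E_M η hη hEM hstrict μ hμ
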